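/- The curve x⁴ − x²y² + xy³ + Uy⁴ = 1 is singular at infinity: set U = (1/24)·(4 + (31+3√57)·(46+6√57)^{−1/3} + (100+12√57)·(46+6√57)^{−2/3}). Then there exists a point p ∈ ℝ² with p ≠ 0, p in the closure of the cone ℝ_{>0}·H_{1,U}, h_{1,U}(p) = 0, and the differential of h_{1,U} at p equal to zero. -/

import Mathlib

/-!
Common definitions: the quartic polynomial `hLK L K (x,y) = x⁴ − x²y² + L·x·y³ + K·y⁴` on ℝ²,
the Hessian determinant of a function on ℝ², and the curve `Hcurve L K = H_{L,K}`,
the connected component containing (1,0) of the hyperbolic points on the level set {h = 1}.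
-/

noncomputable section
open Matrix

/-- `h_{L,K}(x,y) = x⁴ − x²y² + L·x·y³ + K·y⁴`. -/
def hLK (L K : ℝ) (v : Fin 2 → ℝ) : ℝ :=
  v 0 ^ 4 - v 0 ^ 2 * v 1 ^ 2 + L * v 0 * v 1 ^ 3 + K * v 1 ^ 4

/-- Determinant of the Hessian matrix of `f : ℝ² → ℝ` at `p`. -/
def hessDet2 (f : (Fin 2 → ℝ) → ℝ) (p : Fin 2 → ℝ) : ℝ :=
  Matrix.det (Matrix.of fun i j : Fin 2 =>
    iteratedFDeriv ℝ 2 f p ![Pi.single i 1, Pi.single j 1])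

/-- `H_{L,K}`: the connected component containing `(1,0)` of
`{p ∈ ℝ² : h_{L,K}(p) = 1 and p is a hyperbolic point of h_{L,K}}`. -/
def Hcurve (L K : ℝ) : Set (Fin 2 → ℝ) :=
  connectedComponentIn {p | hLK L K p = 1 ∧ hessDet2 (hLK L K) p < 0} ![1, 0]

/-- The constant `U` of Theorem 3.2. -/
def Uconst : ℝ :=
  (1/24) * (4 + (31 + 3 * Real.sqrt 57) * (46 + 6 * Real.sqrt 57) ^ (-(1:ℝ)/3) +
    (100 + 12 * Real.sqrt 57) * (46 + 6 * Real.sqrt 57) ^ (-(2:ℝ)/3))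

/-!
Let `t` be the real root of `4t³ - 2t + 1 = 0`; Cardano's formula `t = -(B + 1/(6B))` with
`B³ = (9 + √57)/72` identifies the constant as `U = (2t² - 3t)/4`. Then
`h_{1,U}(x, y) = (x - ty)² (x² + 2txy + (3t² - 1)y²)` with a positive definite second
factor, so `h` and `dh` vanish at `(1, 1/t)`. On the segment `{(1, m) : 1/t < m ≤ 0}` we have
`h > 0` and `t⁴ · det Hess h = (tm - 1)² Q(m)` with `Q < 0`. Rescaled onto `{h = 1}` the
segment becomes a connected arc of hyperbolic points through `(1, 0)`, hence lies in
`H_{1,U}`; so the segment lies in the cone `ℝ_{>0} · H_{1,U}` and its endpoint `(1, 1/t)` in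
the closure of that cone.
-/

open Set

section Derivatives

variable (L K : ℝ)

local notation "π" i => (ContinuousLinearMap.proj i : (Fin 2 → ℝ) →L[ℝ] ℝ)

def gradHLK (p : Fin 2 → ℝ) : (Fin 2 → ℝ) →L[ℝ] ℝ :=
  (4 * p 0 ^ 3 - 2 * p 0 * p 1 ^ 2 + L * p 1 ^ 3) • (π 0) +
    (-2 * p 0 ^ 2 * p 1 + 3 * L * p 0 * p 1 ^ 2 + 4 * K * p 1 ^ 3) • (π 1)

theorem hasFDerivAt_hLK (p : Fin 2 → ℝ) : HasFDerivAt (hLK L K) (gradHLK L K p) p := by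
  have h0 : HasFDerivAt (fun v : Fin 2 → ℝ => v 0) (π 0) p := hasFDerivAt_apply 0 p
  have h1 : HasFDerivAt (fun v : Fin 2 → ℝ => v 1) (π 1) p := hasFDerivAt_apply 1 p
  refine ((((h0.pow 4).sub ((h0.pow 2).mul (h1.pow 2))).add
    ((h0.const_mul L).mul (h1.pow 3))).add ((h1.pow 4).const_mul K)).congr_fderiv ?_
  ext v
  simp only [gradHLK, _root_.add_apply, _root_.sub_apply, _root_.smul_apply,
    ContinuousLinearMap.proj_apply, smul_eq_mul, nsmul_eq_mul]
  ring

theorem fderiv_hLK : fderiv ℝ (hLK L K) = gradHLK L K :=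
  funext fun p => (hasFDerivAt_hLK L K p).fderiv

theorem hessDet2_hLK (p : Fin 2 → ℝ) :
    hessDet2 (hLK L K) p =
      (12 * p 0 ^ 2 - 2 * p 1 ^ 2) * (-2 * p 0 ^ 2 + 6 * L * p 0 * p 1 + 12 * K * p 1 ^ 2) -
        (-4 * p 0 * p 1 + 3 * L * p 1 ^ 2) ^ 2 := by
  have h0 : HasFDerivAt (fun v : Fin 2 → ℝ => v 0) (π 0) p := hasFDerivAt_apply 0 p
  have h1 : HasFDerivAt (fun v : Fin 2 → ℝ => v 1) (π 1) p := hasFDerivAt_apply 1 p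
  have hx := ((((h0.pow 3).const_mul 4).sub ((h0.const_mul 2).mul (h1.pow 2))).add
    ((h1.pow 3).const_mul L)).smul_const (π 0)
  have hy := (((((h0.pow 2).const_mul (-2)).mul h1).add
    ((h0.const_mul (3 * L)).mul (h1.pow 2))).add ((h1.pow 3).const_mul (4 * K))).smul_const (π 1)
  have H := (hx.add hy).congr_of_eventuallyEq (f₁ := gradHLK L K) (.of_forall fun _ => rfl)
  simp only [hessDet2, iteratedFDeriv_two_apply, fderiv_hLK, H.fderiv, det_fin_two, of_apply]
  simp only [_root_.add_apply, _root_.sub_apply, _root_.smul_apply,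
    ContinuousLinearMap.smulRight_apply, ContinuousLinearMap.proj_apply, Pi.single_apply,
    smul_eq_mul, nsmul_eq_mul, cons_val_zero, cons_val_one, cons_val_fin_one]
  norm_num
  ring

end Derivatives

theorem hLK_smul (L K c : ℝ) (v : Fin 2 → ℝ) : hLK L K (c • v) = c ^ 4 * hLK L K v := by
  simp only [hLK, Pi.smul_apply, smul_eq_mul]
  ring

theorem hessDet2_hLK_smul (L K c : ℝ) (v : Fin 2 → ℝ) :
    hessDet2 (hLK L K) (c • v) = c ^ 4 * hessDet2 (hLK L K) v := by
  simp only [hessDet2_hLK, Pi.smul_apply, smul_eq_mul]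
  ring

theorem continuous_hLK (L K : ℝ) : Continuous (hLK L K) := by
  unfold hLK
  fun_prop

theorem continuous_vecCons_one : Continuous fun m : ℝ => (![1, m] : Fin 2 → ℝ) := by
  fun_prop

def posCone {E : Type*} [AddCommGroup E] [Module ℝ E] (S : Set E) : Set E :=
  {x | ∃ l : ℝ, 0 < l ∧ ∃ q ∈ S, x = l • q}

theorem rpow_neg_quarter_pow_four {a : ℝ} (ha : 0 ≤ a) :
    (a ^ (-(1 / 4) : ℝ)) ^ 4 = a⁻¹ := by
  rw [← Real.rpow_natCast, ← Real.rpow_mul ha]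
  norm_num [Real.rpow_neg_one]

theorem vecCons_one_mem_posCone_Hcurve {L K : ℝ} {I : Set ℝ} (hI : IsPreconnected I)
    (hI0 : (0 : ℝ) ∈ I) (hpos : ∀ m ∈ I, 0 < hLK L K ![1, m])
    (hhyp : ∀ m ∈ I, hessDet2 (hLK L K) ![1, m] < 0) {m : ℝ} (hm : m ∈ I) :
    ![1, m] ∈ posCone (Hcurve L K) := by
  set γ : ℝ → Fin 2 → ℝ := fun m => hLK L K ![1, m] ^ (-(1 / 4) : ℝ) • ![1, m]
  have hγ_cont : ContinuousOn γ I :=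
    ((continuous_hLK L K).comp continuous_vecCons_one).continuousOn.rpow_const
      (fun m hm => .inl (hpos m hm).ne') |>.smul continuous_vecCons_one.continuousOn
  have hγ_mem : ∀ m ∈ I, γ m ∈ {p | hLK L K p = 1 ∧ hessDet2 (hLK L K) p < 0} := by
    intro m hm
    have hc := rpow_neg_quarter_pow_four (hpos m hm).le
    refine ⟨?_, ?_⟩
    · rw [hLK_smul, hc, inv_mul_cancel₀ (hpos m hm).ne']
    · rw [hessDet2_hLK_smul, hc]
      exact mul_neg_of_pos_of_neg (inv_pos.2 (hpos m hm)) (hhyp m hm)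
  have hγ_Hcurve : γ '' I ⊆ Hcurve L K :=
    (hI.image γ hγ_cont).subset_connectedComponentIn ⟨0, hI0, by simp [γ, hLK]⟩
      (image_subset_iff.2 hγ_mem)
  refine ⟨hLK L K ![1, m] ^ (1 / 4 : ℝ), Real.rpow_pos_of_pos (hpos m hm) _, γ m,
    hγ_Hcurve ⟨m, hm, rfl⟩, ?_⟩
  rw [smul_smul, ← Real.rpow_add (hpos m hm)]
  norm_num

theorem vecCons_one_mem_closure_posCone_Hcurve {L K a : ℝ} (ha : a < 0)
    (hpos : ∀ m ∈ Ioc a 0, 0 < hLK L K ![1, m])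
    (hhyp : ∀ m ∈ Ioc a 0, hessDet2 (hLK L K) ![1, m] < 0) :
    ![1, a] ∈ closure (posCone (Hcurve L K)) := by
  have ha_mem : a ∈ closure (Ioc a 0) := by
    rw [closure_Ioc ha.ne]
    exact left_mem_Icc.2 ha.le
  refine closure_mono (image_subset_iff.2 fun m hm => ?_)
    (image_closure_subset_closure_image continuous_vecCons_one ⟨a, ha_mem, rfl⟩)
  exact vecCons_one_mem_posCone_Hcurve isPreconnected_Ioc ⟨ha, le_rfl⟩ hpos hhyp hm

section SingularDirection

variable {t : ℝ}

theorem hLK_eq_sq_mul (hcub : 4 * t ^ 3 - 2 * t + 1 = 0) (v : Fin 2 → ℝ) :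
    hLK 1 ((2 * t ^ 2 - 3 * t) / 4) v =
      (v 0 - t * v 1) ^ 2 * (v 0 ^ 2 + 2 * t * v 0 * v 1 + (3 * t ^ 2 - 1) * v 1 ^ 2) := by
  rw [hLK]
  linear_combination (v 0 * v 1 ^ 3 - 3 / 4 * t * v 1 ^ 4) * hcub

theorem hLK_vecCons_one_pos (hcub : 4 * t ^ 3 - 2 * t + 1 = 0) (ht : t < 0) {m : ℝ}
    (hm : t * m ≠ 1) :
    0 < hLK 1 ((2 * t ^ 2 - 3 * t) / 4) ![1, m] := by
  have h2t : 1 < 2 * t ^ 2 := by nlinarith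
  have hq : 0 < 1 + 2 * t * m + (3 * t ^ 2 - 1) * m ^ 2 := by
    -- `(3t² - 1) q(m) = ((3t² - 1) m + t)² + (2t² - 1)`
    have h : 0 < (3 * t ^ 2 - 1) * (1 + 2 * t * m + (3 * t ^ 2 - 1) * m ^ 2) := by
      nlinarith [sq_nonneg ((3 * t ^ 2 - 1) * m + t)]
    exact pos_of_mul_pos_right h (by linarith)
  rw [hLK_eq_sq_mul hcub]
  simp only [cons_val_zero, cons_val_one, one_pow, mul_one]
  exact mul_pos (sq_pos_of_ne_zero (sub_ne_zero.2 hm.symm)) hq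

theorem hessDet2_hLK_vecCons_one_neg (hcub : 4 * t ^ 3 - 2 * t + 1 = 0) (ht : t < 0) {m : ℝ}
    (hm : t * m ≠ 1) (hm0 : m ≤ 0) :
    hessDet2 (hLK 1 ((2 * t ^ 2 - 3 * t) / 4)) ![1, m] < 0 := by
  have hQ : -(12 * t ^ 2 - 18 * t + 9) * t ^ 2 * m ^ 2 + (48 * t ^ 2 - 30 * t + 6) * m +
      (-12 * t ^ 2 + 6 * t) < 0 := by
    nlinarith [mul_nonneg (mul_nonneg (by nlinarith : (0 : ℝ) ≤ 12 * t ^ 2 - 18 * t + 9)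
      (sq_nonneg t)) (sq_nonneg m), mul_nonpos_of_nonneg_of_nonpos
      (by nlinarith : (0 : ℝ) ≤ 48 * t ^ 2 - 30 * t + 6) hm0]
  have hfactor : t ^ 4 * hessDet2 (hLK 1 ((2 * t ^ 2 - 3 * t) / 4)) ![1, m] =
      (t * m - 1) ^ 2 * (-(12 * t ^ 2 - 18 * t + 9) * t ^ 2 * m ^ 2 +
        (48 * t ^ 2 - 30 * t + 6) * m + (-12 * t ^ 2 + 6 * t)) := by
    rw [hessDet2_hLK]
    simp only [cons_val_zero, cons_val_one]
    linear_combination (18 * t ^ 3 * m ^ 2 - 27 * t ^ 2 * m ^ 2 - 6 * t ^ 2 * m ^ 3 +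
      12 * t * m ^ 2 + 18 * t * m - 6 * t - 6 * m) * hcub
  have hsq : 0 < (t * m - 1) ^ 2 := sq_pos_of_ne_zero (sub_ne_zero.2 hm)
  have ht4 : 0 < t ^ 4 := Even.pow_pos (by decide) ht.ne
  exact neg_of_mul_neg_right (hfactor ▸ mul_neg_of_pos_of_neg hsq hQ) ht4.le

theorem ne_zero_of_cubic (hcub : 4 * t ^ 3 - 2 * t + 1 = 0) : t ≠ 0 := by
  rintro rfl
  norm_num at hcub

theorem hLK_vecCons_inv_eq_zero (hcub : 4 * t ^ 3 - 2 * t + 1 = 0) :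
    hLK 1 ((2 * t ^ 2 - 3 * t) / 4) ![1, t⁻¹] = 0 := by
  rw [hLK_eq_sq_mul hcub]
  simp [mul_inv_cancel₀ (ne_zero_of_cubic hcub)]

theorem gradHLK_vecCons_inv_eq_zero (hcub : 4 * t ^ 3 - 2 * t + 1 = 0) :
    gradHLK 1 ((2 * t ^ 2 - 3 * t) / 4) ![1, t⁻¹] = 0 := by
  have ht := ne_zero_of_cubic hcub
  ext v
  simp only [gradHLK, cons_val_zero, cons_val_one, _root_.add_apply, _root_.smul_apply,
    ContinuousLinearMap.proj_apply, smul_eq_mul, _root_.zero_apply]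
  field_simp
  linear_combination v 0 * hcub

end SingularDirection

theorem rpow_neg_div_three_of_pow_three {x : ℝ} (hx : 0 ≤ x) (k : ℝ) :
    (x ^ 3) ^ (-k / 3) = (x ^ k)⁻¹ := by
  rw [← Real.rpow_natCast_mul hx, ← Real.rpow_neg hx]
  ring_nf

theorem cardano_root {B : ℝ} (hB0 : B ≠ 0) (hB : 216 * B ^ 6 - 54 * B ^ 3 + 1 = 0) :
    4 * (-(B + (6 * B)⁻¹)) ^ 3 - 2 * (-(B + (6 * B)⁻¹)) + 1 = 0 := by
  have h : 4 * (-(B + (6 * B)⁻¹)) ^ 3 - 2 * (-(B + (6 * B)⁻¹)) + 1 =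
      -(216 * B ^ 6 - 54 * B ^ 3 + 1) / (54 * B ^ 3) := by
    field_simp
    ring
  rw [h, hB, neg_zero, zero_div]

theorem exists_root_Uconst :
    ∃ t < 0, 4 * t ^ 3 - 2 * t + 1 = 0 ∧ Uconst = (2 * t ^ 2 - 3 * t) / 4 := by
  have hs : √57 ^ 2 = 57 := Real.sq_sqrt (by norm_num)
  obtain ⟨B, hB0, hB3⟩ : ∃ B : ℝ, 0 < B ∧ B ^ 3 = (9 + √57) / 72 :=
    ⟨_, by positivity, Real.rpow_inv_natCast_pow (by positivity) three_ne_zero⟩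
  have hB : 216 * B ^ 6 - 54 * B ^ 3 + 1 = 0 := by
    linear_combination (216 * B ^ 3 + 3 * (9 + √57) - 54) * hB3 + hs / 24
  have hc : 46 + 6 * √57 = (12 * B ^ 2) ^ 3 := by
    linear_combination (-1728 * B ^ 3 - 24 * (9 + √57)) * hB3 - hs / 3
  have hs_eq : √57 = 72 * B ^ 3 - 9 := by linear_combination -72 * hB3
  refine ⟨-(B + (6 * B)⁻¹), neg_neg_of_pos (by positivity), cardano_root hB0.ne' hB, ?_⟩
  rw [Uconst, hc, rpow_neg_div_three_of_pow_three (by positivity),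
    rpow_neg_div_three_of_pow_three (by positivity), Real.rpow_one, Real.rpow_two, hs_eq,
    ← sub_eq_zero]
  calc _ = -(216 * B ^ 6 - 54 * B ^ 3 + 1) / (432 * B ^ 4) := by
        field_simp
        ring
    _ = 0 := by rw [hB, neg_zero, zero_div]

/-- **The curve `x⁴ − x²y² + xy³ + Uy⁴ = 1` is singular at infinity.**
There is a nonzero point `p` in the closure of the cone `ℝ_{>0}·H_{1,U}` with
`h_{1,U}(p) = 0` and vanishing differential of `h_{1,U}` at `p`. -/
theorem curve_1U_singular_at_infinity :
    ∃ p : Fin 2 → ℝ, p ≠ 0 ∧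
      p ∈ closure {x : Fin 2 → ℝ | ∃ l : ℝ, 0 < l ∧ ∃ q ∈ Hcurve 1 Uconst, x = l • q} ∧
      hLK 1 Uconst p = 0 ∧ fderiv ℝ (hLK 1 Uconst) p = 0 := by
  obtain ⟨t, ht, hcub, hU⟩ := exists_root_Uconst
  have htm : ∀ m ∈ Ioc t⁻¹ 0, t * m ≠ 1 := fun m hm =>
    (lt_of_lt_of_eq (mul_lt_mul_of_neg_left hm.1 ht) (mul_inv_cancel₀ ht.ne)).ne
  refine ⟨![1, t⁻¹], fun h => by simpa using congrFun h 0, ?_, ?_, ?_⟩ <;> rw [hU]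
  · exact vecCons_one_mem_closure_posCone_Hcurve (inv_lt_zero.2 ht)
      (fun m hm => hLK_vecCons_one_pos hcub ht (htm m hm))
      (fun m hm => hessDet2_hLK_vecCons_one_neg hcub ht (htm m hm) hm.2)
  · exact hLK_vecCons_inv_eq_zero hcub
  · rw [fderiv_hLK]
    exact gradHLK_vecCons_inv_eq_zero hcub
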